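/- arXiv:1610.04200 — 3 statements merged into one kernel-verified Lean document; each statement's English description precedes it below -/
import Mathlib

section
/- Let u: ℝⁿ → ℝ be continuous with u(0) = 0, ‖∇u‖_{L^∞(ℝⁿ)} = 1 (u is 1-Lipschitz with Lipschitz constant exactly 1 in every ball complement sense), and suppose that sup_{r ≥ ρ} r^{ε−2}·‖u‖_{L^∞(B_r)} → ∞ as ρ → 0⁺ for some ε ∈ (0,1). Then there exists a sequence r_k → 0⁺ such that ‖∇u‖_{L^∞(B_{r_k})} ≥ (1/2)·r_k^{1−ε}, and the rescaled functions u_k(x) = u(r_k x)/(r_k·‖∇u‖_{L^∞(B_{r_k})}) satisfy |∇u_k(x)| ≤ 2(1 + |x|^{1−ε}) for all x ∈ ℝⁿ. -/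
/-!
Write `S(r) = ‖∇u‖_{L^∞(B_r)} ≤ 1`. The mean value theorem gives `‖u‖_{L^∞(B_r)} ≤ r S(r)`, so the
hypothesis makes `S(r) / r^{1-ε}` unbounded on `(0, 1]`. Take `r_k` maximising this quotient over
`[r_k, 1]` up to a factor `2`, with quotient above `k + 1`; since `S ≤ 1` this forces `r_k → 0`.
Then `|∇u(r_k x)|` is at most `S(r_k |x|) ≤ 2 S(r_k) |x|^{1-ε}` while `1 ≤ |x| ≤ 1 / r_k`, at most
`S(r_k)` for `|x| ≤ 1`, and at most `1 ≤ S(r_k) / r_k^{1-ε} ≤ S(r_k) |x|^{1-ε}` for `|x| > 1 / r_k`.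
-/

open Real Filter Set Metric

/-- The paper's `‖∇u‖_{L^∞(B_r)}`. -/
noncomputable def gradSup {E : Type*} [NormedAddCommGroup E] [NormedSpace ℝ E]
    (u : E → ℝ) (r : ℝ) : ℝ :=
  ⨆ x : closedBall (0 : E) r, ‖fderiv ℝ u x‖

section gradSup

variable {E : Type*} [NormedAddCommGroup E] [NormedSpace ℝ E] {u : E → ℝ} {C r : ℝ}

lemma norm_fderiv_le_gradSup (hC : ∀ x, ‖fderiv ℝ u x‖ ≤ C) {x : E}
    (hx : x ∈ closedBall (0 : E) r) : ‖fderiv ℝ u x‖ ≤ gradSup u r :=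
  le_ciSup (f := fun y : closedBall (0 : E) r => ‖fderiv ℝ u y‖)
    ⟨C, by rintro _ ⟨y, rfl⟩; exact hC y⟩ ⟨x, hx⟩

lemma gradSup_le (hC : ∀ x, ‖fderiv ℝ u x‖ ≤ C) (hr : 0 ≤ r) : gradSup u r ≤ C :=
  have : Nonempty (closedBall (0 : E) r) := ⟨⟨0, mem_closedBall_self hr⟩⟩
  ciSup_le fun y => hC y

lemma abs_le_gradSup_mul (hu : Differentiable ℝ u) (h0 : u 0 = 0)
    (hC : ∀ x, ‖fderiv ℝ u x‖ ≤ C) {x : E} (hx : x ∈ closedBall (0 : E) r) :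
    |u x| ≤ gradSup u r * r := by
  have hr : 0 ≤ r := nonneg_of_mem_closedBall hx
  have hS : 0 ≤ gradSup u r := (norm_nonneg _).trans (norm_fderiv_le_gradSup hC hx)
  have hmvt := (convex_closedBall (0 : E) r).norm_image_sub_le_of_norm_fderiv_le
    (fun y _ => hu y) (fun y hy => norm_fderiv_le_gradSup hC hy) (mem_closedBall_self hr) hx
  rw [h0, sub_zero, sub_zero] at hmvt
  calc |u x| = ‖u x‖ := rfl
    _ ≤ gradSup u r * ‖x‖ := hmvt
    _ ≤ gradSup u r * r := by gcongr; exact mem_closedBall_zero_iff.1 hx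

lemma rpow_mul_lt_gradSup (hu : Differentiable ℝ u) (h0 : u 0 = 0)
    (hC : ∀ x, ‖fderiv ℝ u x‖ ≤ C) {α M : ℝ} (hr : 0 < r)
    (h : M * r ^ (α + 1) < ⨆ x : closedBall (0 : E) r, |u x|) : M * r ^ α < gradSup u r := by
  have : Nonempty (closedBall (0 : E) r) := ⟨⟨0, mem_closedBall_self hr.le⟩⟩
  have hsup : (⨆ x : closedBall (0 : E) r, |u x|) ≤ gradSup u r * r :=
    ciSup_le fun x => abs_le_gradSup_mul hu h0 hC x.2
  rw [rpow_add_one hr.ne', ← mul_assoc] at h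
  exact lt_of_mul_lt_mul_right (h.trans_le hsup) hr.le

lemma norm_fderiv_comp_smul_div (hu : Differentiable ℝ u) (hr : 0 < r) (S : ℝ) (x : E) :
    ‖fderiv ℝ (fun y => u (r • y) / (r * S)) x‖ = ‖fderiv ℝ u (r • x)‖ / |S| := by
  have hdiff : DifferentiableAt ℝ (fun y => u (r • y)) x :=
    (hu _).comp x ((differentiableAt_id).const_smul r)
  simp_rw [div_eq_mul_inv]
  rw [fderiv_mul_const hdiff, fderiv_comp_smul, norm_smul, norm_smul, norm_inv, norm_mul,
    norm_of_nonneg hr.le, Real.norm_eq_abs, mul_inv, mul_comm r⁻¹]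
  field_simp

lemma norm_fderiv_smul_le_of_almost_maximal (hC : ∀ x, ‖fderiv ℝ u x‖ ≤ 1) {α : ℝ} (hα : 0 ≤ α)
    (hr : 0 < r) (hlarge : r ^ α ≤ gradSup u r)
    (hmax : ∀ s ∈ Icc r 1, gradSup u s / s ^ α ≤ 2 * (gradSup u r / r ^ α)) (x : E) :
    ‖fderiv ℝ u (r • x)‖ ≤ 2 * (1 + ‖x‖ ^ α) * gradSup u r := by
  set θ := gradSup u r / r ^ α with hθ_def
  set s := r * max 1 ‖x‖
  have hrα : 0 < r ^ α := rpow_pos_of_pos hr α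
  have hθ : 1 ≤ θ := (one_le_div hrα).2 hlarge
  have hrs : r ≤ s := le_mul_of_one_le_right hr.le (le_max_left _ _)
  have hs : 0 < s := hr.trans_le hrs
  have hbound : ‖fderiv ℝ u (r • x)‖ ≤ 2 * θ * s ^ α := by
    rcases le_or_gt s 1 with hs1 | hs1
    · have hx : r • x ∈ closedBall (0 : E) s := by
        rw [mem_closedBall_zero_iff, norm_smul, norm_of_nonneg hr.le]
        exact mul_le_mul_of_nonneg_left (le_max_right _ _) hr.le
      calc ‖fderiv ℝ u (r • x)‖ ≤ gradSup u s := norm_fderiv_le_gradSup hC hx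
        _ = gradSup u s / s ^ α * s ^ α := (div_mul_cancel₀ _ (rpow_pos_of_pos hs α).ne').symm
        _ ≤ 2 * θ * s ^ α := by gcongr; exact hmax s ⟨hrs, hs1⟩
    · have := one_le_rpow hs1.le hα
      calc ‖fderiv ℝ u (r • x)‖ ≤ 1 := hC _
        _ ≤ 2 * θ * s ^ α := by nlinarith
  have hmax_rpow : max 1 ‖x‖ ^ α ≤ 1 + ‖x‖ ^ α := by
    rw [rpow_max zero_le_one (norm_nonneg x) hα, one_rpow]
    exact max_le_add_of_nonneg zero_le_one (by positivity)
  calc ‖fderiv ℝ u (r • x)‖ ≤ 2 * θ * s ^ α := hbound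
    _ = 2 * max 1 ‖x‖ ^ α * gradSup u r := by
      rw [mul_rpow hr.le (by positivity), hθ_def]
      field_simp
    _ ≤ 2 * (1 + ‖x‖ ^ α) * gradSup u r := by
      gcongr
      exact hrα.le.trans hlarge

end gradSup

lemma exists_half_maximizer {ι : Type*} {s : Set ι} {g : ι → ℝ} (hbdd : BddAbove (g '' s))
    {a₀ : ι} (ha₀ : a₀ ∈ s) (hpos : 0 < g a₀) :
    ∃ a ∈ s, g a₀ / 2 < g a ∧ ∀ b ∈ s, g b ≤ 2 * g a := by
  have hle : ∀ b ∈ s, g b ≤ sSup (g '' s) := fun b hb => le_csSup hbdd (mem_image_of_mem g hb)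
  obtain ⟨_, ⟨a, ha, rfl⟩, hlt⟩ := exists_lt_of_lt_csSup ⟨_, mem_image_of_mem g ha₀⟩
    (half_lt_self (hpos.trans_le (hle a₀ ha₀)))
  exact ⟨a, ha, by linarith [hle a₀ ha₀], fun b hb => by linarith [hle b hb]⟩

lemma exists_almost_maximal_radius {S : ℝ → ℝ} {α : ℝ} (hα : 0 ≤ α)
    (hS : ∀ r, 0 < r → S r ≤ 1) (hblow : ∀ M, ∃ r ∈ Ioc (0 : ℝ) 1, M * r ^ α < S r) (M : ℝ) :
    ∃ r ∈ Ioc (0 : ℝ) 1, M * r ^ α < S r ∧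
      ∀ s ∈ Icc r 1, S s / s ^ α ≤ 2 * (S r / r ^ α) := by
  obtain ⟨r₀, ⟨hr₀, hr₀1⟩, h⟩ := hblow (2 * |M|)
  have hp : 0 < r₀ ^ α := rpow_pos_of_pos hr₀ α
  have h₀ : 2 * |M| < S r₀ / r₀ ^ α := (lt_div_iff₀ hp).2 h
  have hbdd : BddAbove ((fun s => S s / s ^ α) '' Icc r₀ 1) := ⟨1 / r₀ ^ α, by
    rintro _ ⟨s, hs, rfl⟩
    exact div_le_div₀ zero_le_one (hS s (hr₀.trans_le hs.1)) hp (rpow_le_rpow hr₀.le hs.1 hα)⟩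
  obtain ⟨r, hr, hhalf, hmax⟩ := exists_half_maximizer hbdd ⟨le_rfl, hr₀1⟩
    (by linarith [abs_nonneg M])
  have hr0 : 0 < r := hr₀.trans_le hr.1
  refine ⟨r, ⟨hr0, hr.2⟩, ?_, fun s hs => hmax s ⟨hr.1.trans hs.1, hs.2⟩⟩
  rw [← lt_div_iff₀ (rpow_pos_of_pos hr0 α)]
  linarith [le_abs_self M]

lemma tendsto_nhds_zero_of_rpow {ι : Type*} {l : Filter ι} {r : ι → ℝ} {α : ℝ} (hα : 0 < α)
    (hr : ∀ k, 0 ≤ r k) (h : Tendsto (fun k => r k ^ α) l (nhds 0)) : Tendsto r l (nhds 0) := by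
  have h' := h.rpow_const (p := α⁻¹) (Or.inr (inv_nonneg.2 hα.le))
  rw [zero_rpow (inv_ne_zero hα.ne')] at h'
  exact h'.congr fun k => rpow_rpow_inv (hr k) hα.ne'

theorem blowup_sequence_at_regular_point_general (n : ℕ) (ε : ℝ) (hε : ε ∈ Set.Ioo (0 : ℝ) 1)
    (u : EuclideanSpace ℝ (Fin n) → ℝ)
    (h0 : u 0 = 0)
    (hdiff : Differentiable ℝ u)
    (hgrad_le : ∀ x, ‖fderiv ℝ u x‖ ≤ 1)
    (hblow : ∀ M : ℝ, ∃ r ∈ Set.Ioc (0 : ℝ) 1,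
      M * r ^ ((2 : ℝ) - ε) <
        ⨆ x : Metric.closedBall (0 : EuclideanSpace ℝ (Fin n)) r, |u x.1|) :
    ∃ r : ℕ → ℝ, (∀ k, 0 < r k) ∧ Tendsto r atTop (nhds 0) ∧
      ∀ k,
        (1 / 2) * (r k) ^ ((1 : ℝ) - ε) ≤
          (⨆ x : Metric.closedBall (0 : EuclideanSpace ℝ (Fin n)) (r k),
            ‖fderiv ℝ u x.1‖) ∧
        ∀ x : EuclideanSpace ℝ (Fin n),
          ‖fderiv ℝ (fun y => u ((r k) • y) /
              ((r k) * ⨆ z : Metric.closedBall (0 : EuclideanSpace ℝ (Fin n)) (r k),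
                ‖fderiv ℝ u z.1‖)) x‖ ≤ 2 * (1 + ‖x‖ ^ ((1 : ℝ) - ε)) := by
  have hα : 0 < 1 - ε := sub_pos.2 hε.2
  have hS1 : ∀ r, 0 < r → gradSup u r ≤ 1 := fun r hr => gradSup_le hgrad_le hr.le
  have hblow' : ∀ M, ∃ r ∈ Ioc (0 : ℝ) 1, M * r ^ (1 - ε) < gradSup u r := fun M => by
    obtain ⟨r, hr, h⟩ := hblow M
    rw [show (2 : ℝ) - ε = 1 - ε + 1 by ring] at h
    exact ⟨r, hr, rpow_mul_lt_gradSup hdiff h0 hgrad_le hr.1 h⟩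
  choose r hr hlarge hmax using fun k : ℕ => exists_almost_maximal_radius hα.le hS1 hblow' (k + 1)
  have hpow : ∀ k, 0 < r k ^ (1 - ε) := fun k => rpow_pos_of_pos (hr k).1 _
  have hrpow_le : ∀ k, r k ^ (1 - ε) ≤ gradSup u (r k) := fun k => by
    nlinarith [hlarge k, hpow k, (k.cast_nonneg : (0 : ℝ) ≤ k)]
  refine ⟨r, fun k => (hr k).1, ?_, fun k => ⟨?_, fun x => ?_⟩⟩
  · refine tendsto_nhds_zero_of_rpow hα (fun k => (hr k).1.le) (squeeze_zero (fun k => (hpow k).le)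
      (fun k => ?_) tendsto_one_div_add_atTop_nhds_zero_nat)
    rw [le_div_iff₀ (by positivity), mul_comm]
    linarith [hlarge k, hS1 _ (hr k).1]
  · rw [← gradSup]
    linarith [hrpow_le k, hpow k]
  · have hS : 0 < gradSup u (r k) := (hpow k).trans_le (hrpow_le k)
    rw [← gradSup, norm_fderiv_comp_smul_div hdiff (hr k).1, abs_of_pos hS, div_le_iff₀ hS]
    exact norm_fderiv_smul_le_of_almost_maximal hgrad_le hα.le (hr k).1 (hrpow_le k) (hmax k) x

/-- Blow-up sequence construction at a regular point (Lemma 5.2): if `u` is a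
`C¹` function with `u(0) = 0`, `‖∇u‖_{L^∞(ℝⁿ)} = 1`, and
`sup_{r ≥ ρ} r^{ε-2} ‖u‖_{L^∞(B_r)} → ∞` as `ρ → 0⁺` (i.e. the supremum is
unbounded along small radii), then there is a sequence `r_k → 0⁺` with
`‖∇u‖_{L^∞(B_{r_k})} ≥ (1/2) r_k^{1-ε}`, and the rescalings
`u_k(x) = u(r_k x)/(r_k ‖∇u‖_{L^∞(B_{r_k})})` satisfy
`|∇u_k(x)| ≤ 2(1 + |x|^{1-ε})` for all `x`. -/
theorem blowup_sequence_at_regular_point (n : ℕ) (ε : ℝ) (hε : ε ∈ Set.Ioo (0 : ℝ) 1)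
    (u : EuclideanSpace ℝ (Fin n) → ℝ)
    (hcont : Continuous u) (h0 : u 0 = 0)
    (hdiff : Differentiable ℝ u)
    (hgrad_le : ∀ x, ‖fderiv ℝ u x‖ ≤ 1)
    (hgrad_sup : (⨆ x : EuclideanSpace ℝ (Fin n), ‖fderiv ℝ u x‖) = 1)
    (hblow : ∀ M : ℝ, ∃ r ∈ Set.Ioc (0 : ℝ) 1,
      M * r ^ ((2 : ℝ) - ε) <
        ⨆ x : Metric.closedBall (0 : EuclideanSpace ℝ (Fin n)) r, |u x.1|) :
    ∃ r : ℕ → ℝ, (∀ k, 0 < r k) ∧ Tendsto r atTop (nhds 0) ∧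
      ∀ k,
        (1 / 2) * (r k) ^ ((1 : ℝ) - ε) ≤
          (⨆ x : Metric.closedBall (0 : EuclideanSpace ℝ (Fin n)) (r k),
            ‖fderiv ℝ u x.1‖) ∧
        ∀ x : EuclideanSpace ℝ (Fin n),
          ‖fderiv ℝ (fun y => u ((r k) • y) /
              ((r k) * ⨆ z : Metric.closedBall (0 : EuclideanSpace ℝ (Fin n)) (r k),
                ‖fderiv ℝ u z.1‖)) x‖ ≤ 2 * (1 + ‖x‖ ^ ((1 : ℝ) - ε)) :=
  blowup_sequence_at_regular_point_general n ε hε u h0 hdiff hgrad_le hblow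
end

section
/- Let 0 < β ≤ β₀ < Υ < 1, ν ∈ S^{n−1}, and u ∈ C(B₁). For r ∈ (0,1) define Q*(r) = (∫_{B_r} u(x)·((x·ν)₊)^β dx) / (∫_{B_r} ((x·ν)₊)^{2β} dx) and φ_r(x) = Q*(r)·((x·ν)₊)^β. Assume there is C₀ > 0 such that ‖u − φ_r‖_{L^∞(B_r)} ≤ C₀·r^Υ for all r ∈ (0,1). Then there exists Q ∈ ℝ with |Q| ≤ C·(C₀ + ‖u‖_{L^∞(B₁)}) such that ‖u − Q·((x·ν)₊)^β‖_{L^∞(B_r)} ≤ C·C₀·r^Υ for all r ∈ (0,1), where C depends only on Υ and β₀. -/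
open Real MeasureTheory

/-! The approximation hypothesis at two comparable scales `s ≤ r ≤ 2s`, tested at the point
`(s/2)ν` where the profile `((x·ν)₊)^β` is of size `r^β`, gives
`|Q*(r) - Q*(s)| ≲ C₀ r^{Υ-β}`. Since `Υ > β`, these increments are summable along the dyadic
scales `2^{-k}`, so `Q*(r)` converges as `r → 0` to some `Q` with `|Q*(r) - Q| ≲ C₀ r^{Υ-β}`.
Multiplying by the profile, which is at most `r^β` on `B_r`, gives the error `C₀ r^Υ` for `Q`. -/

theorem abs_le_iSup_ball_of_continuousOn {X : Type*} [PseudoMetricSpace X] [ProperSpace X]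
    {f : X → ℝ} {c : X} {R : ℝ} (hf : ContinuousOn f (Metric.closedBall c R)) :
    ∀ x ∈ Metric.ball c R, |f x| ≤ ⨆ y : Metric.ball c R, |f y| := by
  obtain ⟨B, hB⟩ := (isCompact_closedBall c R).exists_bound_of_continuousOn hf
  have hbdd : BddAbove (Set.range fun y : Metric.ball c R => |f y|) := by
    refine ⟨B, ?_⟩
    rintro _ ⟨y, rfl⟩
    exact hB y (Metric.ball_subset_closedBall y.2)
  exact fun x hx => le_ciSup hbdd ⟨x, hx⟩

theorem exists_dist_le_of_dyadic {X : Type*} [PseudoMetricSpace X] [CompleteSpace X]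
    {g : ℝ → X} {A δ : ℝ} (hA : 0 ≤ A) (hδ : 0 < δ)
    (hg : ∀ r s, 0 < s → s ≤ r → r ≤ 2 * s → r < 1 → dist (g r) (g s) ≤ A * r ^ δ) :
    ∃ Q, ∀ r ∈ Set.Ioo (0 : ℝ) 1, dist (g r) Q ≤ (1 + (1 - (2⁻¹ : ℝ) ^ δ)⁻¹) * A * r ^ δ := by
  set ρ : ℝ := (2⁻¹ : ℝ) ^ δ
  have hρ : ρ < 1 := Real.rpow_lt_one (by norm_num) (by norm_num) hδ
  have hscale (k : ℕ) : ((2⁻¹ : ℝ) ^ k) ^ δ = ρ ^ k := (Real.rpow_pow_comm (by norm_num) δ k).symm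
  have hstep (k : ℕ) :
      dist (g (2⁻¹ ^ (k + 1))) (g (2⁻¹ ^ (k + 1 + 1))) ≤ (A * ρ) * ρ ^ k := by
    calc _ ≤ A * ((2⁻¹ : ℝ) ^ (k + 1)) ^ δ :=
          hg _ _ (by positivity) (pow_le_pow_of_le_one (by norm_num) (by norm_num) (by omega))
            (by rw [pow_succ _ (k + 1)]; linarith)
            (pow_lt_one₀ (by norm_num) (by norm_num) (by omega))
      _ = (A * ρ) * ρ ^ k := by rw [hscale, pow_succ]; ring
  obtain ⟨Q, hQ⟩ := cauchySeq_tendsto_of_complete (cauchySeq_of_le_geometric ρ _ hρ hstep)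
  refine ⟨Q, fun r ⟨hr0, hr1⟩ => ?_⟩
  obtain ⟨k, hkr, hrk⟩ :=
    exists_nat_pow_near_of_lt_one hr0 hr1.le (by norm_num : (0 : ℝ) < 2⁻¹) (by norm_num)
  have hnear : dist (g r) (g (2⁻¹ ^ (k + 1))) ≤ A * r ^ δ :=
    hg _ _ (by positivity) hkr.le (by rw [pow_succ]; linarith) hr1
  have hfar : dist (g (2⁻¹ ^ (k + 1))) Q ≤ (1 - ρ)⁻¹ * A * r ^ δ := by
    have hρ' : 0 < 1 - ρ := sub_pos.2 hρ
    calc _ ≤ A * ρ * ρ ^ k / (1 - ρ) := dist_le_of_le_geometric_of_tendsto ρ _ hρ hstep hQ k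
      _ = (1 - ρ)⁻¹ * A * ((2⁻¹ : ℝ) ^ (k + 1)) ^ δ := by
          rw [hscale, pow_succ]; field_simp
      _ ≤ (1 - ρ)⁻¹ * A * r ^ δ := by gcongr
  calc dist (g r) Q ≤ dist (g r) (g (2⁻¹ ^ (k + 1))) + dist (g (2⁻¹ ^ (k + 1))) Q :=
        dist_triangle _ _ _
    _ ≤ A * r ^ δ + (1 - ρ)⁻¹ * A * r ^ δ := add_le_add hnear hfar
    _ = (1 + (1 - ρ)⁻¹) * A * r ^ δ := by ring

def IsBlowupApprox {E : Type*} [NormedAddCommGroup E] [InnerProductSpace ℝ E]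
    (u : E → ℝ) (ν : E) (β Υ C₀ : ℝ) (q : ℝ → ℝ) : Prop :=
  ∀ r ∈ Set.Ioo (0 : ℝ) 1, ∀ x ∈ Metric.ball (0 : E) r,
    |u x - q r * (max (inner ℝ ν x) 0) ^ β| ≤ C₀ * r ^ Υ

/-- `4 ^ β` compares the profile at radii `r` and `s / 2 ≥ r / 4`, and `(1 - 2^{-(Υ-β)})⁻¹` sums
the dyadic geometric series of coefficient increments. -/
noncomputable def blowupConst (β Υ : ℝ) : ℝ := 4 ^ β * (3 + 2 * (1 - (2⁻¹ : ℝ) ^ (Υ - β))⁻¹)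

theorem one_sub_two_inv_rpow_pos {δ : ℝ} (hδ : 0 < δ) : 0 < 1 - (2⁻¹ : ℝ) ^ δ :=
  sub_pos.2 (Real.rpow_lt_one (by norm_num) (by norm_num) hδ)

theorem blowupConst_pos {β Υ : ℝ} (hβΥ : β < Υ) : 0 < blowupConst β Υ := by
  have := one_sub_two_inv_rpow_pos (sub_pos.2 hβΥ)
  unfold blowupConst
  positivity

theorem blowupConst_le {β β₀ Υ : ℝ} (hββ₀ : β ≤ β₀) (hβ₀Υ : β₀ < Υ) :
    blowupConst β Υ ≤ blowupConst β₀ Υ := by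
  have hpos := one_sub_two_inv_rpow_pos (sub_pos.2 hβ₀Υ)
  have hρ : (2⁻¹ : ℝ) ^ (Υ - β) ≤ 2⁻¹ ^ (Υ - β₀) :=
    Real.rpow_le_rpow_of_exponent_ge (by norm_num) (by norm_num) (by linarith)
  have hinv : (1 - (2⁻¹ : ℝ) ^ (Υ - β))⁻¹ ≤ (1 - 2⁻¹ ^ (Υ - β₀))⁻¹ := inv_anti₀ hpos (by linarith)
  have h4 : (4 : ℝ) ^ β ≤ 4 ^ β₀ := Real.rpow_le_rpow_of_exponent_le (by norm_num) hββ₀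
  have hpos' : 0 < (1 - (2⁻¹ : ℝ) ^ (Υ - β))⁻¹ := inv_pos.2 (by linarith)
  unfold blowupConst
  exact mul_le_mul h4 (by linarith) (by linarith) (by positivity)

namespace IsBlowupApprox

variable {E : Type*} [NormedAddCommGroup E] [InnerProductSpace ℝ E]
  {u : E → ℝ} {ν : E} {β Υ C₀ : ℝ} {q : ℝ → ℝ}

theorem abs_sub_smul_le (h : IsBlowupApprox u ν β Υ C₀ q) (hν : ‖ν‖ = 1) {r t : ℝ}
    (hr : r ∈ Set.Ioo (0 : ℝ) 1) (ht : 0 ≤ t) (htr : t < r) :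
    |u (t • ν) - q r * t ^ β| ≤ C₀ * r ^ Υ := by
  have := h r hr (t • ν) (by simpa [norm_smul, hν, abs_of_nonneg ht] using htr)
  rwa [real_inner_smul_right, real_inner_self_eq_norm_sq, hν, one_pow, mul_one,
    max_eq_left ht] at this

theorem abs_sub_le_of_le_two_mul (h : IsBlowupApprox u ν β Υ C₀ q) (hν : ‖ν‖ = 1)
    (hβ : 0 ≤ β) (hΥ : 0 ≤ Υ) (hC₀ : 0 ≤ C₀) {r s : ℝ} (hs : 0 < s) (hsr : s ≤ r)
    (hr2 : r ≤ 2 * s) (hr : r < 1) :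
    |q r - q s| ≤ 2 * 4 ^ β * C₀ * r ^ (Υ - β) := by
  have hr0 : 0 < r := hs.trans_le hsr
  have hfit : |q r - q s| * (s / 2) ^ β ≤ 2 * C₀ * r ^ Υ := by
    have h₁ := h.abs_sub_smul_le hν ⟨hr0, hr⟩ (t := s / 2) (by positivity) (by linarith)
    have h₂ := h.abs_sub_smul_le hν ⟨hs, hsr.trans_lt hr⟩ (t := s / 2) (by positivity)
      (by linarith)
    have hsΥ : C₀ * s ^ Υ ≤ C₀ * r ^ Υ := by gcongr
    calc |q r - q s| * (s / 2) ^ β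
        = |(q r - q s) * (s / 2) ^ β| := by
          rw [abs_mul, abs_of_nonneg (by positivity : (0 : ℝ) ≤ (s / 2) ^ β)]
      _ = |(u ((s / 2) • ν) - q s * (s / 2) ^ β) - (u ((s / 2) • ν) - q r * (s / 2) ^ β)| := by
          ring_nf
      _ ≤ C₀ * s ^ Υ + C₀ * r ^ Υ := (abs_sub _ _).trans (add_le_add h₂ h₁)
      _ ≤ 2 * C₀ * r ^ Υ := by linarith
  have hscale : r ^ β ≤ 4 ^ β * (s / 2) ^ β := by
    rw [← Real.mul_rpow (by norm_num) (by positivity)]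
    gcongr
    linarith
  calc |q r - q s| = |q r - q s| * r ^ β / r ^ β := by field_simp
    _ ≤ |q r - q s| * (4 ^ β * (s / 2) ^ β) / r ^ β := by gcongr
    _ ≤ 4 ^ β * (2 * C₀ * r ^ Υ) / r ^ β := by rw [mul_left_comm]; gcongr
    _ = 2 * 4 ^ β * C₀ * r ^ (Υ - β) := by rw [Real.rpow_sub hr0]; ring

theorem abs_apply_two_inv_le (h : IsBlowupApprox u ν β Υ C₀ q) (hν : ‖ν‖ = 1)
    (hΥ : 0 ≤ Υ) (hC₀ : 0 ≤ C₀) {M : ℝ}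
    (hM : ∀ x ∈ Metric.ball (0 : E) 1, |u x| ≤ M) :
    |q 2⁻¹| ≤ 4 ^ β * (M + C₀) := by
  have hfit := h.abs_sub_smul_le hν (r := 2⁻¹) ⟨by norm_num, by norm_num⟩ (t := 4⁻¹)
    (by norm_num) (by norm_num)
  have hu : |u ((4⁻¹ : ℝ) • ν)| ≤ M := hM _ (by norm_num [norm_smul, hν])
  have hΥ1 : C₀ * (2⁻¹ : ℝ) ^ Υ ≤ C₀ :=
    mul_le_of_le_one_right hC₀ (Real.rpow_le_one (by norm_num) (by norm_num) hΥ)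
  have hq : |q 2⁻¹| * (4⁻¹ : ℝ) ^ β ≤ M + C₀ := by
    calc |q 2⁻¹| * (4⁻¹ : ℝ) ^ β = |q 2⁻¹ * (4⁻¹ : ℝ) ^ β| := by
          rw [abs_mul, abs_of_nonneg (by positivity : (0 : ℝ) ≤ (4⁻¹ : ℝ) ^ β)]
      _ ≤ |u ((4⁻¹ : ℝ) • ν)| + |u ((4⁻¹ : ℝ) • ν) - q 2⁻¹ * (4⁻¹ : ℝ) ^ β| := by
          linarith [abs_sub_abs_le_abs_sub (q 2⁻¹ * (4⁻¹ : ℝ) ^ β) (u ((4⁻¹ : ℝ) • ν)),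
            abs_sub_comm (q 2⁻¹ * (4⁻¹ : ℝ) ^ β) (u ((4⁻¹ : ℝ) • ν))]
      _ ≤ M + C₀ := by linarith
  calc |q 2⁻¹| = 4 ^ β * (|q 2⁻¹| * (4⁻¹ : ℝ) ^ β) := by
        rw [mul_left_comm, ← Real.mul_rpow (by norm_num) (by norm_num)]; norm_num
    _ ≤ 4 ^ β * (M + C₀) := by gcongr

theorem exists_forall_abs_sub_le (h : IsBlowupApprox u ν β Υ C₀ q) (hν : ‖ν‖ = 1)
    (hβ : 0 ≤ β) (hβΥ : β < Υ) (hC₀ : 0 ≤ C₀) {M : ℝ}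
    (hM : ∀ x ∈ Metric.ball (0 : E) 1, |u x| ≤ M) :
    ∃ Q : ℝ, |Q| ≤ blowupConst β Υ * (C₀ + M) ∧
      ∀ r ∈ Set.Ioo (0 : ℝ) 1, ∀ x ∈ Metric.ball (0 : E) r,
        |u x - Q * (max (inner ℝ ν x) 0) ^ β| ≤ blowupConst β Υ * C₀ * r ^ Υ := by
  have hΥ : 0 ≤ Υ := hβ.trans hβΥ.le
  have hδ : 0 < Υ - β := sub_pos.2 hβΥ
  obtain ⟨Q, hQ⟩ := exists_dist_le_of_dyadic (g := q) (A := 2 * 4 ^ β * C₀) (by positivity) hδ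
    fun r s hs hsr hr2 hr => h.abs_sub_le_of_le_two_mul hν hβ hΥ hC₀ hs hsr hr2 hr
  simp only [Real.dist_eq] at hQ
  set K := 1 + (1 - (2⁻¹ : ℝ) ^ (Υ - β))⁻¹
  have hK : 0 ≤ K := by have := one_sub_two_inv_rpow_pos hδ; positivity
  have h4 : (1 : ℝ) ≤ 4 ^ β := Real.one_le_rpow (by norm_num) hβ
  have hconst : blowupConst β Υ = 4 ^ β * (1 + 2 * K) := by unfold blowupConst; ring
  refine ⟨Q, ?_, fun r hr x hx => ?_⟩
  · have hM0 : 0 ≤ M := (abs_nonneg _).trans (hM 0 (Metric.mem_ball_self one_pos))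
    have hhalf : K * (2 * 4 ^ β * C₀) * (2⁻¹ : ℝ) ^ (Υ - β) ≤ K * (2 * 4 ^ β * C₀) :=
      mul_le_of_le_one_right (by positivity) (Real.rpow_le_one (by norm_num) (by norm_num) hδ.le)
    calc |Q| ≤ |q 2⁻¹| + |q 2⁻¹ - Q| := by
          linarith [abs_sub_abs_le_abs_sub Q (q 2⁻¹), abs_sub_comm Q (q 2⁻¹)]
      _ ≤ 4 ^ β * (M + C₀) + K * (2 * 4 ^ β * C₀) := by
          gcongr
          · exact h.abs_apply_two_inv_le hν hΥ hC₀ hM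
          · exact (hQ 2⁻¹ ⟨by norm_num, by norm_num⟩).trans hhalf
      _ ≤ blowupConst β Υ * (C₀ + M) := by
          rw [hconst]
          nlinarith [mul_nonneg (mul_nonneg hK (zero_le_one.trans h4)) hM0]
  · have hr0 : 0 < r := hr.1
    have hφ : (max (inner ℝ ν x) 0) ^ β ≤ r ^ β := by
      have hx' : ‖x‖ < r := by simpa using hx
      have hνx : inner ℝ ν x ≤ r :=
        (real_inner_le_norm ν x).trans (by rw [hν, one_mul]; exact hx'.le)
      gcongr
      exact max_le hνx hr0.le
    calc |u x - Q * (max (inner ℝ ν x) 0) ^ β|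
        ≤ |u x - q r * (max (inner ℝ ν x) 0) ^ β| + |q r - Q| * (max (inner ℝ ν x) 0) ^ β := by
          rw [show u x - Q * (max (inner ℝ ν x) 0) ^ β = (u x - q r * (max (inner ℝ ν x) 0) ^ β)
            + (q r - Q) * (max (inner ℝ ν x) 0) ^ β by ring]
          refine (abs_add_le _ _).trans_eq ?_
          rw [abs_mul, abs_of_nonneg (by positivity : (0 : ℝ) ≤ (max (inner ℝ ν x) 0) ^ β)]
      _ ≤ C₀ * r ^ Υ + K * (2 * 4 ^ β * C₀) * r ^ (Υ - β) * r ^ β := by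
          gcongr
          · exact h r hr x hx
          · exact hQ r hr
      _ = (1 + 2 * 4 ^ β * K) * C₀ * r ^ Υ := by
          rw [mul_assoc _ (r ^ (Υ - β)), ← Real.rpow_add hr0, sub_add_cancel]; ring
      _ ≤ blowupConst β Υ * C₀ * r ^ Υ := by rw [hconst]; gcongr; nlinarith

end IsBlowupApprox

theorem single_blowup_coefficient_general (Υ β₀ : ℝ) (hβ₀Υ : β₀ < Υ) :
    ∃ C : ℝ, 0 < C ∧
      ∀ (n : ℕ) (ν : EuclideanSpace ℝ (Fin n)), ‖ν‖ = 1 →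
      ∀ (u : EuclideanSpace ℝ (Fin n) → ℝ),
        ContinuousOn u (Metric.closedBall 0 1) →
      ∀ (β C₀ : ℝ), 0 < β → β ≤ β₀ → 0 < C₀ →
      (∀ r ∈ Set.Ioo (0 : ℝ) 1, ∀ x ∈ Metric.ball (0 : EuclideanSpace ℝ (Fin n)) r,
        |u x -
          ((∫ y in Metric.ball (0 : EuclideanSpace ℝ (Fin n)) r,
              u y * (max (inner ℝ ν y : ℝ) 0) ^ β) /
           (∫ y in Metric.ball (0 : EuclideanSpace ℝ (Fin n)) r,
              (max (inner ℝ ν y : ℝ) 0) ^ (2 * β))) *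
          (max (inner ℝ ν x : ℝ) 0) ^ β| ≤ C₀ * r ^ Υ) →
      ∃ Q : ℝ,
        |Q| ≤ C * (C₀ + ⨆ x : Metric.ball (0 : EuclideanSpace ℝ (Fin n)) 1, |u x.1|) ∧
        ∀ r ∈ Set.Ioo (0 : ℝ) 1, ∀ x ∈ Metric.ball (0 : EuclideanSpace ℝ (Fin n)) r,
          |u x - Q * (max (inner ℝ ν x : ℝ) 0) ^ β| ≤ C * C₀ * r ^ Υ := by
  refine ⟨blowupConst β₀ Υ, blowupConst_pos hβ₀Υ, ?_⟩
  intro n ν hν u hu β C₀ hβ hββ₀ hC₀ happ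
  have hM := abs_le_iSup_ball_of_continuousOn hu
  -- `happ` unfolds to `IsBlowupApprox` with `q` the projection coefficient `Q*`.
  obtain ⟨Q, hQ, hQu⟩ :=
    IsBlowupApprox.exists_forall_abs_sub_le happ hν hβ.le (hββ₀.trans_lt hβ₀Υ) hC₀.le hM
  have hC := blowupConst_le hββ₀ hβ₀Υ
  have hM0 := (abs_nonneg _).trans (hM 0 (Metric.mem_ball_self one_pos))
  exact ⟨Q, hQ.trans (by gcongr), fun r hr x hx => (hQu r hr x hx).trans (by have := hr.1; gcongr)⟩

/-- Lemma 7.8 (Lemma 5.3 of Ros-Oton–Serra): if `u` is approximated at every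
scale `r ∈ (0,1)` by its `L²(B_r)`-best multiple `Q*(r)((x·ν)₊)^β` with error
`C₀ r^Υ`, then there is a single `Q`, with `|Q| ≤ C(C₀ + ‖u‖_{L^∞(B₁)})`, such
that `‖u - Q((x·ν)₊)^β‖_{L^∞(B_r)} ≤ C C₀ r^Υ` for all `r ∈ (0,1)`, where `C`
depends only on `Υ` and `β₀`. -/
theorem single_blowup_coefficient (Υ β₀ : ℝ) (hβ₀ : 0 < β₀) (hβ₀Υ : β₀ < Υ) (hΥ : Υ < 1) :
    ∃ C : ℝ, 0 < C ∧
      ∀ (n : ℕ) (ν : EuclideanSpace ℝ (Fin n)), ‖ν‖ = 1 →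
      ∀ (u : EuclideanSpace ℝ (Fin n) → ℝ),
        ContinuousOn u (Metric.closedBall 0 1) →
      ∀ (β C₀ : ℝ), 0 < β → β ≤ β₀ → 0 < C₀ →
      (∀ r ∈ Set.Ioo (0 : ℝ) 1, ∀ x ∈ Metric.ball (0 : EuclideanSpace ℝ (Fin n)) r,
        |u x -
          ((∫ y in Metric.ball (0 : EuclideanSpace ℝ (Fin n)) r,
              u y * (max (inner ℝ ν y : ℝ) 0) ^ β) /
           (∫ y in Metric.ball (0 : EuclideanSpace ℝ (Fin n)) r,
              (max (inner ℝ ν y : ℝ) 0) ^ (2 * β))) *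
          (max (inner ℝ ν x : ℝ) 0) ^ β| ≤ C₀ * r ^ Υ) →
      ∃ Q : ℝ,
        |Q| ≤ C * (C₀ + ⨆ x : Metric.ball (0 : EuclideanSpace ℝ (Fin n)) 1, |u x.1|) ∧
        ∀ r ∈ Set.Ioo (0 : ℝ) 1, ∀ x ∈ Metric.ball (0 : EuclideanSpace ℝ (Fin n)) r,
          |u x - Q * (max (inner ℝ ν x : ℝ) 0) ^ β| ≤ C * C₀ * r ^ Υ :=
  single_blowup_coefficient_general Υ β₀ hβ₀Υ
end

section
/- Let b ∈ ℝⁿ, c̄ > 0, x̄ ∈ ℝⁿ, r > 0, and let ū ∈ C²(B_r(x̄)) ∩ C(B̄_r(x̄)) satisfy ū ≥ 0, (Δ + ∂²_{bb}) ū ≥ c̄ in Ω_r := {ū > 0} ∩ B_r(x̄), and ū(x̄) > 0. Then sup_{∂B_r(x̄)} ū ≥ c·r², where c = c̄/(2(n + ‖b‖²)). -/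
open Real Metric

/-!
Subtract the paraboloid `c‖x - x̄‖²` from `ū` with `2c(n + ‖b‖²) < c̄`. The difference is positive
at `x̄`, so its maximum over the closed ball is positive, hence taken where `ū > 0`. It cannot be
taken inside the ball: there every second directional derivative of the difference is `≤ 0`, so
`(Δ + ∂²_{bb}) ū ≤ 2c(n + ‖b‖²) < c̄`. On the sphere the maximum gives `ū ≥ c r²`, and letting
`c ↑ c̄ / (2(n + ‖b‖²))` proves the bound.
-/

open Filter Set Topology
open scoped RealInnerProductSpace

theorem IsLocalMax.deriv_deriv_nonpos {g : ℝ → ℝ} {t : ℝ} (h : IsLocalMax g t)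
    (hc : ContinuousAt g t) : deriv (deriv g) t ≤ 0 := by
  by_contra! hpos
  -- the second-derivative test makes `t` a local minimum too, so `g` is constant near `t`
  have hmin : IsLocalMin g t := isLocalMin_of_deriv_deriv_pos hpos h.deriv_eq_zero hc
  have hconst : g =ᶠ[𝓝 t] fun _ => g t := by
    filter_upwards [h, hmin] with s hs hs' using le_antisymm hs hs'
  have := hconst.deriv.deriv_eq
  simp only [deriv_const', deriv_const] at this
  exact hpos.ne' this

section SecondDirDeriv

variable {E : Type*} [NormedAddCommGroup E] [NormedSpace ℝ E]

noncomputable def secondDirDeriv (f : E → ℝ) (x w : E) : ℝ :=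
  fderiv ℝ (fun y => fderiv ℝ f y w) x w

theorem HasFDerivAt.hasDerivAt_comp_add_smul {F : Type*} [NormedAddCommGroup F]
    [NormedSpace ℝ F] {f : E → F} {f' : E →L[ℝ] F} {x w : E} {t : ℝ}
    (hf : HasFDerivAt f f' (x + t • w)) : HasDerivAt (fun s : ℝ => f (x + s • w)) (f' w) t := by
  have := hf.comp_hasDerivAt t (((hasDerivAt_id' t).smul_const w).const_add x)
  rwa [one_smul] at this

theorem ContDiffAt.differentiableAt_fderiv_apply {f : E → ℝ} {x : E} (hf : ContDiffAt ℝ 2 f x)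
    (w : E) : DifferentiableAt ℝ (fun y => fderiv ℝ f y w) x :=
  ((hf.fderiv_right le_rfl).differentiableAt one_ne_zero).clm_apply (differentiableAt_const w)

theorem ContDiffAt.deriv_deriv_comp_add_smul {f : E → ℝ} {x : E} (hf : ContDiffAt ℝ 2 f x)
    (w : E) : deriv (deriv fun t : ℝ => f (x + t • w)) 0 = secondDirDeriv f x w := by
  have hline : ContinuousAt (fun t : ℝ => x + t • w) 0 := by fun_prop
  have hdiff : ∀ᶠ t : ℝ in 𝓝 0, DifferentiableAt ℝ f (x + t • w) := by
    refine hline.eventually (?_ : ∀ᶠ y in 𝓝 (x + (0 : ℝ) • w), DifferentiableAt ℝ f y)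
    rw [zero_smul, add_zero]
    filter_upwards [hf.eventually (by simp)] with y hy using hy.differentiableAt two_ne_zero
  have hderiv : deriv (fun t : ℝ => f (x + t • w)) =ᶠ[𝓝 0] fun t => fderiv ℝ f (x + t • w) w := by
    filter_upwards [hdiff] with t ht using ht.hasFDerivAt.hasDerivAt_comp_add_smul.deriv
  have hsecond : HasFDerivAt (fun y => fderiv ℝ f y w)
      (fderiv ℝ (fun y => fderiv ℝ f y w) x) (x + (0 : ℝ) • w) := by
    simpa using (hf.differentiableAt_fderiv_apply w).hasFDerivAt
  rw [hderiv.deriv_eq, hsecond.hasDerivAt_comp_add_smul.deriv, secondDirDeriv]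

theorem IsLocalMax.secondDirDeriv_nonpos {f : E → ℝ} {x : E} (h : IsLocalMax f x)
    (hf : ContDiffAt ℝ 2 f x) (w : E) : secondDirDeriv f x w ≤ 0 := by
  rw [← hf.deriv_deriv_comp_add_smul w]
  have hline : ContinuousAt (fun t : ℝ => x + t • w) 0 := by fun_prop
  have hcont : ContinuousAt f (x + (0 : ℝ) • w) := by simpa using hf.continuousAt
  have hmax : IsLocalMax f (x + (0 : ℝ) • w) := by simpa using h
  exact (hmax.comp_continuous (g := fun t : ℝ => x + t • w) hline).deriv_deriv_nonpos
    (hcont.comp (f := fun t : ℝ => x + t • w) hline)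

theorem secondDirDeriv_sub {f g : E → ℝ} {x : E} (hf : ContDiffAt ℝ 2 f x)
    (hg : ContDiffAt ℝ 2 g x) (w : E) :
    secondDirDeriv (f - g) x w = secondDirDeriv f x w - secondDirDeriv g x w := by
  have hfirst : (fun y => fderiv ℝ (f - g) y w) =ᶠ[𝓝 x]
      fun y => fderiv ℝ f y w - fderiv ℝ g y w := by
    filter_upwards [hf.eventually (by simp), hg.eventually (by simp)] with y hfy hgy
    rw [fderiv_sub (hfy.differentiableAt two_ne_zero) (hgy.differentiableAt two_ne_zero)]
    rfl
  rw [secondDirDeriv, hfirst.fderiv_eq,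
    fderiv_fun_sub (hf.differentiableAt_fderiv_apply w) (hg.differentiableAt_fderiv_apply w)]
  rfl

end SecondDirDeriv

section Paraboloid

variable {E : Type*} [NormedAddCommGroup E] [InnerProductSpace ℝ E]

theorem secondDirDeriv_const_mul_norm_sub_sq (c : ℝ) (a x w : E) :
    secondDirDeriv (fun y => c * ‖y - a‖ ^ 2) x w = 2 * c * ‖w‖ ^ 2 := by
  have hsub (y : E) : HasFDerivAt (fun y => y - a) (ContinuousLinearMap.id ℝ E) y :=
    (hasFDerivAt_id y).sub_const a
  have hfirst : (fun y => fderiv ℝ (fun y => c * ‖y - a‖ ^ 2) y w) =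
      fun y => c * (2 * ⟪y - a, w⟫) := by
    ext y
    rw [((hsub y).norm_sq.const_mul c).fderiv]
    simp [inner_sub_left]
  rw [secondDirDeriv, hfirst,
    (((hsub x).inner ℝ (hasFDerivAt_const w x)).const_mul 2 |>.const_mul c).fderiv]
  simp
  ring

theorem secondDirDeriv_le_of_isLocalMax_sub_paraboloid {u : E → ℝ} {a z : E} {c : ℝ}
    (hmax : IsLocalMax (fun x => u x - c * ‖x - a‖ ^ 2) z) (hu : ContDiffAt ℝ 2 u z) (w : E) :
    secondDirDeriv u z w ≤ 2 * c * ‖w‖ ^ 2 := by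
  have hpar : ContDiffAt ℝ 2 (fun y => c * ‖y - a‖ ^ 2) z :=
    (contDiff_const.mul ((contDiff_norm_sq ℝ).comp (contDiff_id.sub contDiff_const))).contDiffAt
  have : secondDirDeriv (u - fun y => c * ‖y - a‖ ^ 2) z w ≤ 0 :=
    hmax.secondDirDeriv_nonpos (hu.sub hpar) w
  rw [secondDirDeriv_sub hu hpar, secondDirDeriv_const_mul_norm_sub_sq] at this
  linarith

variable [ProperSpace E] {ι : Type*} [Fintype ι] (w : ι → E) {u : E → ℝ} {a : E} {r cbar : ℝ}

theorem exists_mem_sphere_mul_sq_le (hr : 0 ≤ r) (hu2 : ContDiffOn ℝ 2 u (ball a r))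
    (huc : ContinuousOn u (closedBall a r))
    (hsub : ∀ x ∈ ball a r, 0 < u x → cbar ≤ ∑ i, secondDirDeriv u x (w i))
    (hpos : 0 < u a) {c : ℝ} (hc : 0 ≤ c) (hcbar : c * (2 * ∑ i, ‖w i‖ ^ 2) < cbar) :
    ∃ z ∈ sphere a r, c * r ^ 2 ≤ u z := by
  set v : E → ℝ := fun x => u x - c * ‖x - a‖ ^ 2
  have hvc : ContinuousOn v (closedBall a r) := huc.sub (by fun_prop)
  obtain ⟨z, hz, hmax⟩ := (isCompact_closedBall a r).exists_isMaxOn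
    ⟨a, mem_closedBall_self hr⟩ hvc
  have hvz : 0 < v z := calc
    0 < u a := hpos
    _ = v a := by simp [v]
    _ ≤ v z := hmax (mem_closedBall_self hr)
  have hzs : z ∈ sphere a r := by
    rw [← closedBall_sdiff_ball]
    refine ⟨hz, fun hzb => ?_⟩
    have huz : 0 < u z := hvz.trans_le (sub_le_self _ (by positivity))
    have hloc : IsLocalMax v z :=
      hmax.isLocalMax (mem_of_superset (isOpen_ball.mem_nhds hzb) ball_subset_closedBall)
    have hu : ContDiffAt ℝ 2 u z := hu2.contDiffAt (isOpen_ball.mem_nhds hzb)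
    have : cbar ≤ c * (2 * ∑ i, ‖w i‖ ^ 2) := calc
      cbar ≤ ∑ i, secondDirDeriv u z (w i) := hsub z hzb huz
      _ ≤ ∑ i, 2 * c * ‖w i‖ ^ 2 := Finset.sum_le_sum fun i _ =>
        secondDirDeriv_le_of_isLocalMax_sub_paraboloid hloc hu (w i)
      _ = c * (2 * ∑ i, ‖w i‖ ^ 2) := by
        rw [Finset.mul_sum, Finset.mul_sum]
        exact Finset.sum_congr rfl fun i _ => by ring
    linarith
  refine ⟨z, hzs, ?_⟩
  have hvz' : 0 < u z - c * ‖z - a‖ ^ 2 := hvz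
  rw [mem_sphere_iff_norm.mp hzs] at hvz'
  linarith

theorem exists_mem_sphere_div_mul_sq_le (hcbar : 0 < cbar) (hr : 0 < r)
    (hu2 : ContDiffOn ℝ 2 u (ball a r)) (huc : ContinuousOn u (closedBall a r))
    (hsub : ∀ x ∈ ball a r, 0 < u x → cbar ≤ ∑ i, secondDirDeriv u x (w i)) (hpos : 0 < u a) :
    ∃ z ∈ sphere a r, cbar / (2 * ∑ i, ‖w i‖ ^ 2) * r ^ 2 ≤ u z := by
  have key := fun c (hc : 0 ≤ c) => exists_mem_sphere_mul_sq_le w hr.le hu2 huc hsub hpos hc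
  obtain ⟨z₀, hz₀, -⟩ := key 0 le_rfl (by simpa using hcbar)
  obtain ⟨z, hz, hmax⟩ := (isCompact_sphere a r).exists_isMaxOn ⟨z₀, hz₀⟩
    (huc.mono sphere_subset_closedBall)
  refine ⟨z, hz, ?_⟩
  have hle (c : ℝ) (hc : 0 ≤ c) (hcbar' : c * (2 * ∑ i, ‖w i‖ ^ 2) < cbar) : c * r ^ 2 ≤ u z :=
    let ⟨y, hy, hcy⟩ := key c hc hcbar'
    hcy.trans (hmax hy)
  rw [← le_div_iff₀ (by positivity)]
  refine le_of_forall_lt_imp_le_of_dense fun c hc => ?_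
  rcases le_or_gt c 0 with hc0 | hc0
  · have hu0 : 0 ≤ u z := by simpa using hle 0 le_rfl (by simpa using hcbar)
    exact hc0.trans (by positivity)
  · have hK : 0 < 2 * ∑ i, ‖w i‖ ^ 2 := (div_pos_iff_of_pos_left hcbar).mp (hc0.trans hc)
    rw [le_div_iff₀ (by positivity)]
    exact hle c hc0.le ((lt_div_iff₀ hK).mp hc)

end Paraboloid

theorem quadratic_nondegeneracy_general (n : ℕ)
    (b : EuclideanSpace ℝ (Fin n)) (cbar r : ℝ) (hcbar : 0 < cbar) (hr : 0 < r)
    (xbar : EuclideanSpace ℝ (Fin n))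
    (u : EuclideanSpace ℝ (Fin n) → ℝ)
    (hu2 : ContDiffOn ℝ 2 u (ball xbar r))
    (huc : ContinuousOn u (closedBall xbar r))
    (hsub : ∀ x ∈ ball xbar r, 0 < u x →
      cbar ≤ (∑ i : Fin n,
        fderiv ℝ (fun y => fderiv ℝ u y (EuclideanSpace.single i (1 : ℝ))) x
          (EuclideanSpace.single i (1 : ℝ))) +
        fderiv ℝ (fun y => fderiv ℝ u y b) x b)
    (hpos : 0 < u xbar) :
    ∃ z ∈ sphere xbar r, cbar / (2 * ((n : ℝ) + ‖b‖ ^ 2)) * r ^ 2 ≤ u z := by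
  let w : Option (Fin n) → EuclideanSpace ℝ (Fin n) :=
    fun i => i.elim b fun i => EuclideanSpace.single i 1
  have hw : ∑ i, ‖w i‖ ^ 2 = n + ‖b‖ ^ 2 := by
    simp [w, Fintype.sum_option, add_comm]
  have hsub' (x : EuclideanSpace ℝ (Fin n)) (hx : x ∈ ball xbar r) (hux : 0 < u x) :
      cbar ≤ ∑ i, secondDirDeriv u x (w i) := by
    rw [Fintype.sum_option, add_comm]
    exact hsub x hx hux
  simpa only [hw] using exists_mem_sphere_div_mul_sq_le w hcbar hr hu2 huc hsub' hpos

/-- Quadratic nondegeneracy step of Proposition 9.1: if `ū ≥ 0` satisfies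
`(Δ + ∂²_{bb}) ū ≥ c̄` on `{ū > 0} ∩ B_r(x̄)` and `ū(x̄) > 0`, then
`sup_{∂B_r(x̄)} ū ≥ c r²` with `c = c̄/(2(n + ‖b‖²))`. -/
theorem quadratic_nondegeneracy (n : ℕ)
    (b : EuclideanSpace ℝ (Fin n)) (cbar r : ℝ) (hcbar : 0 < cbar) (hr : 0 < r)
    (xbar : EuclideanSpace ℝ (Fin n))
    (u : EuclideanSpace ℝ (Fin n) → ℝ)
    (hu2 : ContDiffOn ℝ 2 u (ball xbar r))
    (huc : ContinuousOn u (closedBall xbar r))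
    (hnn : ∀ x ∈ closedBall xbar r, 0 ≤ u x)
    (hsub : ∀ x ∈ ball xbar r, 0 < u x →
      cbar ≤ (∑ i : Fin n,
        fderiv ℝ (fun y => fderiv ℝ u y (EuclideanSpace.single i (1 : ℝ))) x
          (EuclideanSpace.single i (1 : ℝ))) +
        fderiv ℝ (fun y => fderiv ℝ u y b) x b)
    (hpos : 0 < u xbar) :
    ∃ z ∈ sphere xbar r, cbar / (2 * ((n : ℝ) + ‖b‖ ^ 2)) * r ^ 2 ≤ u z :=
  quadratic_nondegeneracy_general n b cbar r hcbar hr xbar u hu2 huc hsub hpos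
end
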